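/- Let d ≤ n be positive integers, σ > 0, U ∈ St(d,n), Σ ∈ SPD(d), μ ∈ ℝ^d and b ∈ ℝ^n, and set Σ̃ := ((1/σ²)(I_n − UUᵀ) + U Σ⁻¹ Uᵀ)⁻¹, μ̃ := Σ̃ U Σ⁻¹ μ + b. Then for every x ∈ ℝ^n: (1/σ²)‖(I_n − UUᵀ)(x − b)‖² + (Uᵀ(x − b) − μ)ᵀ Σ⁻¹ (Uᵀ(x − b) − μ) = (x − μ̃)ᵀ Σ̃⁻¹ (x − μ̃). -/

import Mathlib

/-!
With `P := 1 - U Uᵀ` (the orthogonal projection onto the complement of the range of `U`),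
`Σ̃⁻¹ = σ⁻² P + U Σ⁻¹ Uᵀ` has the explicit inverse `Σ̃ = σ² P + U Σ Uᵀ`, because `P U = 0`,
`P² = P` and `Uᵀ U = 1`. Hence `Σ̃ U Σ⁻¹ = U` and `μ̃ = U μ + b`. Writing `z := x - μ̃`, the
quadratic form `zᵀ Σ̃⁻¹ z` splits as `σ⁻² ‖P z‖² + (Uᵀ z)ᵀ Σ⁻¹ (Uᵀ z)`, and `P z = P (x - b)`,
`Uᵀ z = Uᵀ (x - b) - μ`.
-/

open Matrix

namespace Matrix

variable {R m k : Type*} [CommRing R] [Fintype m]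

theorem mulVec_dotProduct_mulVec_self (P : Matrix m m R) (z : m → R) :
    (P *ᵥ z) ⬝ᵥ (P *ᵥ z) = z ⬝ᵥ ((Pᵀ * P) *ᵥ z) := by
  rw [← mulVec_mulVec, mulVec_transpose, dotProduct_comm z, ← dotProduct_mulVec]

variable [Fintype k] [DecidableEq k] {U : Matrix m k R}

theorem transpose_mulVec_sub_mulVec (hU : Uᵀ * U = 1) (v : m → R) (w : k → R) :
    Uᵀ *ᵥ (v - U *ᵥ w) = Uᵀ *ᵥ v - w := by
  rw [mulVec_sub, mulVec_mulVec, hU, one_mulVec]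

variable [DecidableEq m]

theorem one_sub_mul_transpose_mul_of_transpose_mul_self (hU : Uᵀ * U = 1) :
    (1 - U * Uᵀ) * U = 0 := by
  rw [Matrix.sub_mul, Matrix.one_mul, Matrix.mul_assoc, hU, Matrix.mul_one, sub_self]

theorem transpose_mul_one_sub_mul_transpose_of_transpose_mul_self (hU : Uᵀ * U = 1) :
    Uᵀ * (1 - U * Uᵀ) = 0 := by
  rw [Matrix.mul_sub, Matrix.mul_one, ← Matrix.mul_assoc, hU, Matrix.one_mul, sub_self]

theorem isIdempotentElem_one_sub_mul_transpose (hU : Uᵀ * U = 1) :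
    IsIdempotentElem (1 - U * Uᵀ) := by
  rw [IsIdempotentElem, Matrix.mul_sub (1 - U * Uᵀ), Matrix.mul_one, ← Matrix.mul_assoc,
    one_sub_mul_transpose_mul_of_transpose_mul_self hU, Matrix.zero_mul, sub_zero]

theorem one_sub_mul_transpose_mulVec_sub_mulVec (hU : Uᵀ * U = 1) (v : m → R) (w : k → R) :
    (1 - U * Uᵀ) *ᵥ (v - U *ᵥ w) = (1 - U * Uᵀ) *ᵥ v := by
  rw [mulVec_sub, mulVec_mulVec, one_sub_mul_transpose_mul_of_transpose_mul_self hU,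
    zero_mulVec, sub_zero]

theorem smul_one_sub_add_mul_mul_transpose_mul_eq_one (hU : Uᵀ * U = 1) {a b : R}
    (hab : a * b = 1) {M S : Matrix k k R} (hMS : M * S = 1) :
    (a • (1 - U * Uᵀ) + U * M * Uᵀ) * (b • (1 - U * Uᵀ) + U * S * Uᵀ) = 1 := by
  have hPU := one_sub_mul_transpose_mul_of_transpose_mul_self hU
  have hUP := transpose_mul_one_sub_mul_transpose_of_transpose_mul_self hU
  have hPP := isIdempotentElem_one_sub_mul_transpose hU
  have hcross₁ : (1 - U * Uᵀ) * (U * S * Uᵀ) = 0 := by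
    rw [← Matrix.mul_assoc, ← Matrix.mul_assoc, hPU, Matrix.zero_mul, Matrix.zero_mul]
  have hcross₂ : U * M * Uᵀ * (1 - U * Uᵀ) = 0 := by
    rw [Matrix.mul_assoc, hUP, Matrix.mul_zero]
  have hrange : U * M * Uᵀ * (U * S * Uᵀ) = U * Uᵀ := by
    simp only [Matrix.mul_assoc]
    rw [← Matrix.mul_assoc Uᵀ U, hU, Matrix.one_mul, ← Matrix.mul_assoc M S, hMS,
      Matrix.one_mul]
  rw [Matrix.add_mul, Matrix.mul_add, Matrix.mul_add, smul_mul_smul_comm, hab, one_smul,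
    hPP.eq, Matrix.smul_mul, hcross₁, smul_zero, Matrix.mul_smul, hcross₂, smul_zero, hrange]
  abel

theorem dotProduct_smul_one_sub_add_mul_mul_transpose_mulVec (hU : Uᵀ * U = 1) (a : R)
    (M : Matrix k k R) (z : m → R) :
    z ⬝ᵥ ((a • (1 - U * Uᵀ) + U * M * Uᵀ) *ᵥ z)
      = a * (((1 - U * Uᵀ) *ᵥ z) ⬝ᵥ ((1 - U * Uᵀ) *ᵥ z)) + (Uᵀ *ᵥ z) ⬝ᵥ (M *ᵥ (Uᵀ *ᵥ z)) := by
  rw [mulVec_dotProduct_mulVec_self, transpose_sub, transpose_one, transpose_mul,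
    transpose_transpose, (isIdempotentElem_one_sub_mul_transpose hU).eq, add_mulVec,
    dotProduct_add, smul_mulVec, dotProduct_smul, smul_eq_mul, ← mulVec_mulVec, ← mulVec_mulVec, dotProduct_mulVec z U, ← mulVec_transpose]

end Matrix

theorem stmt_4_general (d n : ℕ)
    (σ : ℝ) (hσ : 0 < σ)
    (U : Matrix (Fin n) (Fin d) ℝ) (hU : Uᵀ * U = 1)
    (Sig : Matrix (Fin d) (Fin d) ℝ) (hSig : Sig.PosDef)
    (μ : Fin d → ℝ) (b : Fin n → ℝ)
    (tSig : Matrix (Fin n) (Fin n) ℝ)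
    (htSig : tSig = ((σ ^ 2)⁻¹ • ((1 : Matrix (Fin n) (Fin n) ℝ) - U * Uᵀ) + U * Sig⁻¹ * Uᵀ)⁻¹)
    (tmu : Fin n → ℝ) (htmu : tmu = tSig *ᵥ (U *ᵥ (Sig⁻¹ *ᵥ μ)) + b)
    (x : Fin n → ℝ) :
    (σ ^ 2)⁻¹ * ((((1 : Matrix (Fin n) (Fin n) ℝ) - U * Uᵀ) *ᵥ (x - b)) ⬝ᵥ
        (((1 : Matrix (Fin n) (Fin n) ℝ) - U * Uᵀ) *ᵥ (x - b)))
      + (Uᵀ *ᵥ (x - b) - μ) ⬝ᵥ (Sig⁻¹ *ᵥ (Uᵀ *ᵥ (x - b) - μ))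
      = (x - tmu) ⬝ᵥ (tSig⁻¹ *ᵥ (x - tmu)) := by
  have hSigdet : IsUnit Sig.det := (isUnit_iff_isUnit_det _).1 hSig.isUnit
  have hσ2 : (σ ^ 2)⁻¹ * σ ^ 2 = 1 := inv_mul_cancel₀ (by positivity)
  have hinv := smul_one_sub_add_mul_mul_transpose_mul_eq_one hU hσ2
    (nonsing_inv_mul Sig hSigdet)
  have htSig_inv : tSig⁻¹ = (σ ^ 2)⁻¹ • (1 - U * Uᵀ) + U * Sig⁻¹ * Uᵀ := by
    rw [htSig, nonsing_inv_nonsing_inv _ (isUnit_det_of_right_inverse hinv)]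
  have htSig_mul : tSig * U = U * Sig := by
    rw [htSig, inv_eq_right_inv hinv, Matrix.add_mul, Matrix.smul_mul,
      one_sub_mul_transpose_mul_of_transpose_mul_self hU, smul_zero, zero_add,
      Matrix.mul_assoc, hU, Matrix.mul_one]
  have htmu_eq : tmu = U *ᵥ μ + b := by
    rw [htmu, mulVec_mulVec, mulVec_mulVec, htSig_mul, Matrix.mul_assoc,
      mul_nonsing_inv Sig hSigdet, Matrix.mul_one]
  have hx : x - tmu = (x - b) - U *ᵥ μ := by rw [htmu_eq]; abel
  rw [htSig_inv, hx, dotProduct_smul_one_sub_add_mul_mul_transpose_mulVec hU,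
    one_sub_mul_transpose_mulVec_sub_mulVec hU, transpose_mulVec_sub_mulVec hU]

theorem stmt_4 (d n : ℕ) (hd : 0 < d) (hn : 0 < n) (hdn : d ≤ n)
    (σ : ℝ) (hσ : 0 < σ)
    (U : Matrix (Fin n) (Fin d) ℝ) (hU : Uᵀ * U = 1)
    (Sig : Matrix (Fin d) (Fin d) ℝ) (hSig : Sig.PosDef)
    (μ : Fin d → ℝ) (b : Fin n → ℝ)
    (tSig : Matrix (Fin n) (Fin n) ℝ)
    (htSig : tSig = ((σ ^ 2)⁻¹ • ((1 : Matrix (Fin n) (Fin n) ℝ) - U * Uᵀ) + U * Sig⁻¹ * Uᵀ)⁻¹)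
    (tmu : Fin n → ℝ) (htmu : tmu = tSig *ᵥ (U *ᵥ (Sig⁻¹ *ᵥ μ)) + b)
    (x : Fin n → ℝ) :
    (σ ^ 2)⁻¹ * ((((1 : Matrix (Fin n) (Fin n) ℝ) - U * Uᵀ) *ᵥ (x - b)) ⬝ᵥ
        (((1 : Matrix (Fin n) (Fin n) ℝ) - U * Uᵀ) *ᵥ (x - b)))
      + (Uᵀ *ᵥ (x - b) - μ) ⬝ᵥ (Sig⁻¹ *ᵥ (Uᵀ *ᵥ (x - b) - μ))
      = (x - tmu) ⬝ᵥ (tSig⁻¹ *ᵥ (x - tmu)) :=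
  stmt_4_general d n σ hσ U hU Sig hSig μ b tSig htSig tmu htmu x
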